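/- Let n ≥ 2 and let q : EuclideanSpace ℝ (Fin n) → ℝ be continuous. Then ∫_{SO(n)} ( ∫_{‖x‖ ≤ 1} (q(x) − q(R x))² dx ) dμ(R) = 2 ∫_{‖x‖ ≤ 1} (q(x) − Pq(x))² dx, where the inner integrals are over the closed unit ball with respect to Lebesgue measure. -/

import Mathlib

/-!
Expanding the square and using that rotations preserve Lebesgue measure on the ball, the left side
is `2 (‖q‖² - ∫ ⟨q, q ∘ R⟩ dμ(R))`, inner products taken in `L²` of the ball. The average `Pq` is
rotation invariant, since a left-invariant probability measure on a group is also right-invariant.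
For every rotation-invariant `h`, Fubini and the invariance of Lebesgue measure give
`⟨h, Pq⟩ = ⟨h, q⟩`; with `h = Pq` this yields `‖q - Pq‖² = ‖q‖² - ⟨q, Pq⟩`, and Fubini once more
gives `⟨q, Pq⟩ = ∫ ⟨q, q ∘ R⟩ dμ(R)`.
-/

open MeasureTheory Matrix

noncomputable section

instance {n : ℕ} : MeasurableSpace (Matrix (Fin n) (Fin n) ℝ) :=
  inferInstanceAs (MeasurableSpace (Fin n → Fin n → ℝ))

/-- `SO(n)`: the special orthogonal group of real `n × n` matrices, as a type. -/
abbrev SOn (n : ℕ) : Type :=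
  Matrix.specialOrthogonalGroup (Fin n) ℝ

/-- The action of a matrix on `EuclideanSpace ℝ (Fin n)` by matrix–vector multiplication. -/
def matAct {n : ℕ} (R : Matrix (Fin n) (Fin n) ℝ) (x : EuclideanSpace ℝ (Fin n)) :
    EuclideanSpace ℝ (Fin n) :=
  (EuclideanSpace.equiv (Fin n) ℝ).symm (R.mulVec (EuclideanSpace.equiv (Fin n) ℝ x))

open Set

theorem MeasureTheory.Measure.isMulRightInvariant_of_isProbabilityMeasure {G : Type*}
    [MeasurableSpace G] [Group G] [MeasurableMul₂ G] [MeasurableInv G] (μ : Measure G)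
    [IsProbabilityMeasure μ] [μ.IsMulLeftInvariant] : μ.IsMulRightInvariant where
  map_mul_right_eq_self g := by
    -- `map (· * g) μ` is again a left-invariant probability measure, and these are unique.
    have h := measure_eq_div_smul (map (· * g) μ) μ (s := univ) (by simp) (by simp)
    rwa [map_apply (measurable_mul_const g) MeasurableSet.univ, preimage_univ, measure_univ,
      div_one, one_smul] at h

theorem integral_sub_sq {α : Type*} [MeasurableSpace α] {ν : Measure α} {f g : α → ℝ}
    (hf : MemLp f 2 ν) (hg : MemLp g 2 ν) :
    ∫ x, (f x - g x) ^ 2 ∂ν = ∫ x, f x ^ 2 ∂ν - 2 * ∫ x, f x * g x ∂ν + ∫ x, g x ^ 2 ∂ν := by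
  have hfg : Integrable (fun x => f x * g x) ν := hf.integrable_mul hg
  have hf2g : Integrable (fun x => f x ^ 2 - 2 * (f x * g x)) ν :=
    hf.integrable_sq.sub (hfg.const_mul 2)
  simp_rw [sub_sq, mul_assoc]
  rw [integral_add hf2g hg.integrable_sq, integral_sub hf.integrable_sq (hfg.const_mul 2),
    integral_const_mul]

theorem MeasureTheory.SMulInvariantMeasure.restrict {M α : Type*} [SMul M α] [MeasurableSpace α]
    {ν : Measure α} [SMulInvariantMeasure M α ν] {s : Set α} (hs : MeasurableSet s)
    (hinv : ∀ c : M, (c • ·) ⁻¹' s = s) : SMulInvariantMeasure M α (ν.restrict s) where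
  measure_preimage_smul c t ht := by
    rw [Measure.restrict_apply' hs, Measure.restrict_apply' hs, ← hinv c, ← preimage_inter,
      measure_preimage_smul c (ht.inter hs), hinv c]

section OrbitAverage

variable {G X : Type*} [Group G] [MeasurableSpace G] [MulAction G X]

def orbitAverage (μ : Measure G) (q : X → ℝ) (x : X) : ℝ :=
  ∫ g, q (g • x) ∂μ

theorem orbitAverage_smul [MeasurableMul G] (μ : Measure G) [μ.IsMulRightInvariant] (q : X → ℝ)
    (g : G) (x : X) :
    orbitAverage μ q (g • x) = orbitAverage μ q x := by
  simp only [orbitAverage, ← mul_smul]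
  exact integral_mul_right_eq_self (fun h => q (h • x)) g

variable [MeasurableSpace X] [MeasurableSMul₂ G X] {μ : Measure G} {ν : Measure X} {q : X → ℝ}
  {C : ℝ}

theorem Measurable.stronglyMeasurable_orbitAverage [SFinite μ] (hq : Measurable q) :
    StronglyMeasurable (orbitAverage μ q) :=
  (hq.comp (measurable_snd.smul measurable_fst)).stronglyMeasurable.integral_prod_right'

variable [SMulInvariantMeasure G X ν]

theorem ae_prod_norm_comp_smul_le [SFinite μ] [SFinite ν] (hq : Measurable q)
    (hC : ∀ᵐ x ∂ν, ‖q x‖ ≤ C) :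
    ∀ᵐ p ∂μ.prod ν, ‖q (p.1 • p.2)‖ ≤ C :=
  (Measure.ae_prod_iff_ae_ae (measurableSet_le (hq.comp measurable_smul).norm measurable_const)).2
    (ae_of_all _ fun g : G => (measurePreserving_smul g ν).quasiMeasurePreserving.ae hC)

theorem ae_norm_orbitAverage_le [IsProbabilityMeasure μ] [SFinite ν] (hq : Measurable q)
    (hC : ∀ᵐ x ∂ν, ‖q x‖ ≤ C) : ∀ᵐ x ∂ν, ‖orbitAverage μ q x‖ ≤ C := by
  have h := (Measure.ae_ae_comm (μ := μ) (ν := ν) (p := fun g x => ‖q (g • x)‖ ≤ C)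
    (measurableSet_le (hq.comp measurable_smul).norm measurable_const)).1
    (ae_of_all _ fun g : G => (measurePreserving_smul g ν).quasiMeasurePreserving.ae hC)
  filter_upwards [h] with x hx
  simpa [orbitAverage] using norm_integral_le_of_norm_le_const hx

variable [IsFiniteMeasure ν] {h : X → ℝ} {D : ℝ}

theorem integrable_mul_comp_smul [IsFiniteMeasure μ] (hq : Measurable q)
    (hC : ∀ᵐ x ∂ν, ‖q x‖ ≤ C) (hh : Measurable h) (hD : ∀ᵐ x ∂ν, ‖h x‖ ≤ D) :
    Integrable (fun p : G × X => h p.2 * q (p.1 • p.2)) (μ.prod ν) :=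
  ((Integrable.of_bound (hq.comp measurable_smul).aestronglyMeasurable C
    (ae_prod_norm_comp_smul_le hq hC)).bdd_mul (hh.comp measurable_snd).aestronglyMeasurable
    (Measure.quasiMeasurePreserving_snd.ae hD))

theorem integral_mul_orbitAverage [IsFiniteMeasure μ] (hq : Measurable q)
    (hC : ∀ᵐ x ∂ν, ‖q x‖ ≤ C) (hh : Measurable h) (hD : ∀ᵐ x ∂ν, ‖h x‖ ≤ D) :
    ∫ x, h x * orbitAverage μ q x ∂ν = ∫ g, ∫ x, h x * q (g • x) ∂ν ∂μ := by
  simp_rw [orbitAverage, ← integral_const_mul]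
  exact (integral_integral_swap (integrable_mul_comp_smul hq hC hh hD)).symm

theorem integral_mul_orbitAverage_of_smul_eq [IsProbabilityMeasure μ] (hq : Measurable q)
    (hC : ∀ᵐ x ∂ν, ‖q x‖ ≤ C) (hh : Measurable h) (hD : ∀ᵐ x ∂ν, ‖h x‖ ≤ D)
    (hinv : ∀ (g : G) x, h (g • x) = h x) :
    ∫ x, h x * orbitAverage μ q x ∂ν = ∫ x, h x * q x ∂ν := by
  rw [integral_mul_orbitAverage hq hC hh hD]
  calc ∫ g, ∫ x, h x * q (g • x) ∂ν ∂μ = ∫ g, ∫ x, h (g • x) * q (g • x) ∂ν ∂μ := by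
        simp_rw [hinv]
    _ = ∫ x, h x * q x ∂ν := by
        simp_rw [integral_smul_eq_self (fun x => h x * q x)]
        simp

theorem integral_sq_sub_comp_smul (hq : Measurable q) (hC : ∀ᵐ x ∂ν, ‖q x‖ ≤ C) (g : G) :
    ∫ x, (q x - q (g • x)) ^ 2 ∂ν = 2 * (∫ x, q x ^ 2 ∂ν - ∫ x, q x * q (g • x) ∂ν) := by
  have hq2 : MemLp q 2 ν := .of_bound hq.aestronglyMeasurable C hC
  have hqg2 : MemLp (fun x => q (g • x)) 2 ν :=
    .of_bound (hq.comp (measurable_const_smul g)).aestronglyMeasurable C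
      ((measurePreserving_smul g ν).quasiMeasurePreserving.ae hC)
  rw [integral_sub_sq hq2 hqg2, integral_smul_eq_self (fun x => q x ^ 2)]
  ring

theorem integral_sq_sub_orbitAverage [MeasurableMul G] [IsProbabilityMeasure μ]
    [μ.IsMulRightInvariant] (hq : Measurable q) (hC : ∀ᵐ x ∂ν, ‖q x‖ ≤ C) :
    ∫ x, (q x - orbitAverage μ q x) ^ 2 ∂ν =
      ∫ x, q x ^ 2 ∂ν - ∫ x, q x * orbitAverage μ q x ∂ν := by
  have hP := hq.stronglyMeasurable_orbitAverage (μ := μ)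
  have hPC := ae_norm_orbitAverage_le (μ := μ) hq hC
  have hPP : ∫ x, orbitAverage μ q x ^ 2 ∂ν = ∫ x, q x * orbitAverage μ q x ∂ν := by
    simp_rw [sq, integral_mul_orbitAverage_of_smul_eq hq hC hP.measurable hPC
      (orbitAverage_smul μ q), mul_comm]
  rw [integral_sub_sq (.of_bound hq.aestronglyMeasurable C hC)
    (.of_bound hP.aestronglyMeasurable C hPC), hPP]
  ring

theorem integral_integral_sq_sub_comp_smul [MeasurableMul₂ G] [MeasurableInv G]
    [IsProbabilityMeasure μ] [μ.IsMulLeftInvariant] (hq : Measurable q)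
    (hC : ∀ᵐ x ∂ν, ‖q x‖ ≤ C) :
    ∫ g, ∫ x, (q x - q (g • x)) ^ 2 ∂ν ∂μ = 2 * ∫ x, (q x - orbitAverage μ q x) ^ 2 ∂ν := by
  have := μ.isMulRightInvariant_of_isProbabilityMeasure
  have hcorr : Integrable (fun g => ∫ x, q x * q (g • x) ∂ν) μ :=
    (integrable_mul_comp_smul hq hC hq hC).integral_prod_left
  simp_rw [integral_sq_sub_comp_smul hq hC, integral_sq_sub_orbitAverage hq hC,
    integral_mul_orbitAverage hq hC hq hC]
  rw [integral_const_mul, integral_sub (integrable_const _) hcorr]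
  simp

end OrbitAverage

instance {n : ℕ} : BorelSpace (Matrix (Fin n) (Fin n) ℝ) :=
  inferInstanceAs (BorelSpace (Fin n → Fin n → ℝ))

instance {n : ℕ} : SecondCountableTopology (Matrix (Fin n) (Fin n) ℝ) :=
  inferInstanceAs (SecondCountableTopology (Fin n → Fin n → ℝ))

namespace SOn

variable {n : ℕ}

instance : SecondCountableTopology (SOn n) :=
  TopologicalSpace.Subtype.secondCountableTopology _

instance : ContinuousInv (SOn n) :=
  ⟨(continuous_star.comp continuous_subtype_val).subtype_mk _⟩

instance : ContinuousSMul (SOn n) (EuclideanSpace ℝ (Fin n)) :=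
  ⟨(EuclideanSpace.equiv (Fin n) ℝ).symm.continuous.comp <|
    (continuous_subtype_val.comp continuous_fst).matrix_mulVec
      ((EuclideanSpace.equiv (Fin n) ℝ).continuous.comp continuous_snd)⟩

def toLinearIsometryEquiv (R : SOn n) :
    EuclideanSpace ℝ (Fin n) ≃ₗᵢ[ℝ] EuclideanSpace ℝ (Fin n) :=
  Unitary.linearIsometryEquiv ⟨toEuclideanCLM (𝕜 := ℝ) (R : Matrix (Fin n) (Fin n) ℝ),
    Unitary.map_mem _ R.2.1⟩

theorem coe_toLinearIsometryEquiv (R : SOn n) : ⇑(toLinearIsometryEquiv R) = (R • ·) := rfl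

instance : SMulInvariantMeasure (SOn n) (EuclideanSpace ℝ (Fin n)) volume :=
  ⟨fun R _ hs => (toLinearIsometryEquiv R).measurePreserving.measure_preimage hs.nullMeasurableSet⟩

theorem preimage_smul_closedBall (R : SOn n) (r : ℝ) :
    (R • ·) ⁻¹' Metric.closedBall (0 : EuclideanSpace ℝ (Fin n)) r = Metric.closedBall 0 r := by
  ext x
  simp [← coe_toLinearIsometryEquiv]

end SOn

theorem stmt3_general (n : ℕ) (q : EuclideanSpace ℝ (Fin n) → ℝ) (hq : Continuous q)
    (μ : Measure (SOn n)) [IsProbabilityMeasure μ] [μ.IsMulLeftInvariant] :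
    ∫ R : SOn n,
        (∫ x in Metric.closedBall (0 : EuclideanSpace ℝ (Fin n)) 1,
          (q x - q (matAct (R : Matrix (Fin n) (Fin n) ℝ) x)) ^ 2) ∂μ =
      2 * ∫ x in Metric.closedBall (0 : EuclideanSpace ℝ (Fin n)) 1,
        (q x - ∫ R : SOn n, q (matAct (R : Matrix (Fin n) (Fin n) ℝ) x) ∂μ) ^ 2 := by
  set B := Metric.closedBall (0 : EuclideanSpace ℝ (Fin n)) 1
  have : SMulInvariantMeasure (SOn n) _ (volume.restrict B) :=
    .restrict measurableSet_closedBall fun R => SOn.preimage_smul_closedBall R 1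
  have : IsFiniteMeasure (volume.restrict B) :=
    isFiniteMeasure_restrict.2 measure_closedBall_lt_top.ne
  obtain ⟨C, hC⟩ := (isCompact_closedBall _ _).exists_bound_of_continuousOn hq.continuousOn
  -- `R • x` for the action inherited from `Matrix` on `Fin n → ℝ` is `matAct R x` by definition.
  exact integral_integral_sq_sub_comp_smul hq.measurable
    (ae_restrict_of_forall_mem measurableSet_closedBall hC)

theorem stmt3 (n : ℕ) (hn : 2 ≤ n) (q : EuclideanSpace ℝ (Fin n) → ℝ) (hq : Continuous q)
    (μ : Measure (SOn n)) [IsProbabilityMeasure μ] [μ.IsMulLeftInvariant] :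
    ∫ R : SOn n,
        (∫ x in Metric.closedBall (0 : EuclideanSpace ℝ (Fin n)) 1,
          (q x - q (matAct (R : Matrix (Fin n) (Fin n) ℝ) x)) ^ 2) ∂μ =
      2 * ∫ x in Metric.closedBall (0 : EuclideanSpace ℝ (Fin n)) 1,
        (q x - ∫ R : SOn n, q (matAct (R : Matrix (Fin n) (Fin n) ℝ) x) ∂μ) ^ 2 :=
  stmt3_general n q hq μ
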